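/- Let M be an MSC over P and Σ. For all events e, f ∈ E: e < f if and only if there exists π ∈ Π^gossip with (e,f) ∈ ⟦π⟧. In other words, the strict causal order < equals the union of the relations ⟦π⟧ over all π ∈ Π^gossip. -/

import Mathlib

namespace Gossip

/-- Events extended with bottom and top elements. -/
inductive ExtEv (E : Type) : Type where
  | bot : ExtEv E
  | evt (e : E) : ExtEv E
  | top : ExtEv E

/-- A message sequence chart (MSC) over processes `P`, alphabet `A`,
with (finite, nonempty) set of events `E`. -/
structure MSC (P A E : Type) : Type where
  fintypeE : Fintype E
  nonemptyE : Nonempty E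
  loc : E → P
  lab : E → A
  /-- process successor relation `→` -/
  next : E → E → Prop
  /-- message relation `◁` -/
  msg : E → E → Prop
  next_loc : ∀ {e f : E}, next e f → loc e = loc f
  next_irrefl : ∀ e : E, ¬ next e e
  next_right_unique : ∀ {e f f' : E}, next e f → next e f' → f = f'
  next_left_unique : ∀ {e e' f : E}, next e f → next e' f → e = e'
  next_total : ∀ e f : E, loc e = loc f →
      Relation.ReflTransGen next e f ∨ Relation.ReflTransGen next f e
  msg_loc : ∀ {e f : E}, msg e f → loc e ≠ loc f
  /-- every event belongs to at most one pair of `◁` -/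
  msg_unique : ∀ {e f e' f' : E}, msg e f → msg e' f' →
      (e = e' ∨ e = f' ∨ f = e' ∨ f = f') → e = e' ∧ f = f'
  fifo : ∀ {e f e' f' : E}, msg e f → msg e' f' → loc e = loc e' → loc f = loc f' →
      (Relation.ReflTransGen next e e' ↔ Relation.ReflTransGen next f f')
  /-- `≤ = (→ ∪ ◁)*` is a partial order -/
  causal_antisymm : ∀ {e f : E},
      Relation.ReflTransGen (fun x y => next x y ∨ msg x y) e f →
      Relation.ReflTransGen (fun x y => next x y ∨ msg x y) f e → e = f

namespace MSC

variable {P A E B : Type}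

/-- the causal order `≤ = (→ ∪ ◁)*` -/
def le (M : MSC P A E) : E → E → Prop :=
  Relation.ReflTransGen (fun x y => M.next x y ∨ M.msg x y)

/-- the strict causal order `<` -/
def lt (M : MSC P A E) (e f : E) : Prop := M.le e f ∧ e ≠ f

/-- `→*` -/
def nextStar (M : MSC P A E) : E → E → Prop := Relation.ReflTransGen M.next

/-- the causal order extended to `E ∪ {⊥,⊤}` with `⊥ < e < ⊤` -/
def extLe (M : MSC P A E) : ExtEv E → ExtEv E → Prop
  | .bot, _ => True
  | _, .top => True
  | .evt e, .evt f => M.le e f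
  | _, _ => False

def extLt (M : MSC P A E) (x y : ExtEv E) : Prop := M.extLe x y ∧ x ≠ y

/-- replace the labelling of an MSC (e.g. to pair it with an extra labelling) -/
def relabel (M : MSC P A E) (μ : E → B) : MSC P B E where
  fintypeE := M.fintypeE
  nonemptyE := M.nonemptyE
  loc := M.loc
  lab := μ
  next := M.next
  msg := M.msg
  next_loc := M.next_loc
  next_irrefl := M.next_irrefl
  next_right_unique := M.next_right_unique
  next_left_unique := M.next_left_unique
  next_total := M.next_total
  msg_loc := M.msg_loc
  msg_unique := M.msg_unique
  fifo := M.fifo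
  causal_antisymm := M.causal_antisymm

end MSC

/-- letters of path expressions: `→`, `→*`, `p▷q`, `⟨a⟩` -/
inductive PathLetter (P A : Type) : Type where
  | next : PathLetter P A
  | nextStar : PathLetter P A
  | msg (p q : P) : PathLetter P A
  | lab (a : A) : PathLetter P A

/-- path expressions: finite words over `Γ` -/
abbrev PathExpr (P A : Type) := List (PathLetter P A)

variable {P A E : Type}

def letterSem (M : MSC P A E) : PathLetter P A → E → E → Prop
  | .next => M.next
  | .nextStar => M.nextStar
  | .msg p q => fun e f => M.loc e = p ∧ M.loc f = q ∧ M.msg e f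
  | .lab a => fun e f => e = f ∧ M.lab e = a

/-- `⟦π⟧` -/
def pathSem (M : MSC P A E) : PathExpr P A → E → E → Prop
  | [] => fun e f => e = f
  | l :: π => fun e g => ∃ f, letterSem M l e f ∧ pathSem M π f g

def letterComp : PathLetter P A → P → P → Prop
  | .msg p q => fun x y => x = p ∧ y = q
  | _ => fun x y => x = y

/-- `Comp(π)`; `π ∈ Π_{p,q}` iff `pcomp π p q` -/
def pcomp : PathExpr P A → P → P → Prop
  | [] => fun x y => x = y
  | l :: π => fun x z => ∃ y, letterComp l x y ∧ pcomp π y z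

/-- `IsLast M π e x` holds iff `x = last_π(e)` (with `x = ⊥` iff no `π`-path into `e`). -/
def IsLast (M : MSC P A E) (π : PathExpr P A) (e : E) : ExtEv E → Prop
  | .bot => ∀ f, ¬ pathSem M π f e
  | .evt g => pathSem M π g e ∧ ∀ f, pathSem M π f e → M.le f g
  | .top => False

/-- `IsFirst M π e x` holds iff `x = first_π(e)` (with `x = ⊤` iff no `π`-path out of `e`). -/
def IsFirst (M : MSC P A E) (π : PathExpr P A) (e : E) : ExtEv E → Prop
  | .top => ∀ f, ¬ pathSem M π e f
  | .evt g => pathSem M π e g ∧ ∀ f, pathSem M π e f → M.le g f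
  | .bot => False

/-- `IsFa M π π' e x` holds iff `x = f_{π,π'}(e) = first_{π'}(last_π(e))`, with
`first_{π'}(⊥) := ⊥`. -/
def IsFa (M : MSC P A E) (π π' : PathExpr P A) (e : E) (x : ExtEv E) : Prop :=
  (IsLast M π e ExtEv.bot ∧ x = ExtEv.bot) ∨
    ∃ g, IsLast M π e (ExtEv.evt g) ∧ IsFirst M π' g x

/-- `IsLastProc M p e x` holds iff `x = last_p(e)`, the maximal event of process `p`
strictly below `e` (`⊥` if none). -/
def IsLastProc (M : MSC P A E) (p : P) (e : E) : ExtEv E → Prop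
  | .bot => ∀ f, M.loc f = p → ¬ M.lt f e
  | .evt g => M.loc g = p ∧ M.lt g e ∧ ∀ f, M.loc f = p → M.lt f e → M.le f g
  | .top => False

/-- `π ≼_e π'`, i.e. `last_π(e) ≤ last_{π'}(e)` -/
def ple (M : MSC P A E) (π π' : PathExpr P A) (e : E) : Prop :=
  ∃ x y, IsLast M π e x ∧ IsLast M π' e y ∧ M.extLe x y

def gossipSuffix : P → List P → PathExpr P A
  | _, [] => []
  | p, q :: w => PathLetter.msg p q :: PathLetter.nextStar :: gossipSuffix q w

/-- `π_w` for `w = p :: rest` -/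
def gossipExpr (p : P) (w : List P) : PathExpr P A :=
  match w with
  | [] => [PathLetter.next, PathLetter.nextStar]
  | _ :: _ => PathLetter.nextStar :: gossipSuffix p w

/-- `π ∈ Π^gossip` -/
def IsGossip (π : PathExpr P A) : Prop :=
  ∃ (p : P) (w : List P), (p :: w).Nodup ∧ π = gossipExpr p w

/-- actions of a CFM transition -/
inductive CAct (P A Msg : Type) : Type where
  | internal (a : A) : CAct P A Msg
  | send (a : A) (m : Msg) (q : P) : CAct P A Msg
  | recv (a : A) (m : Msg) (q : P) : CAct P A Msg

def CAct.labelOf {P A Msg : Type} : CAct P A Msg → A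
  | .internal a => a
  | .send a _ _ => a
  | .recv a _ _ => a

/-- a communicating finite-state machine over `P` and `A` -/
structure CFM (P A : Type) : Type 1 where
  Msg : Type
  msgFin : Fintype Msg
  S : Type
  sFin : Fintype S
  ι : P → S
  Δ : P → Set (S × CAct P A Msg × S)
  Acc : Set (P → S)
  wf_send : ∀ p s a m q s', (s, CAct.send a m q, s') ∈ Δ p → q ≠ p
  wf_recv : ∀ p s a m q s', (s, CAct.recv a m q, s') ∈ Δ p → q ≠ p

namespace CFM

variable {P A E : Type}

/-- `ρ` is a run of the CFM `C` on the MSC `M` -/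
def IsRun (C : CFM P A) (M : MSC P A E) (ρ : E → C.S × CAct P A C.Msg × C.S) : Prop :=
  (∀ e, ρ e ∈ C.Δ (M.loc e)) ∧
  (∀ e, ((ρ e).2.1).labelOf = M.lab e) ∧
  (∀ e, (¬ ∃ f, M.next f e) → (ρ e).1 = C.ι (M.loc e)) ∧
  (∀ e f, M.next e f → (ρ e).2.2 = (ρ f).1) ∧
  (∀ e, (¬ ∃ f, M.msg e f) → (¬ ∃ f, M.msg f e) → ∃ a, (ρ e).2.1 = CAct.internal a) ∧
  (∀ e f, M.msg e f → ∃ m, (ρ e).2.1 = CAct.send (M.lab e) m (M.loc f) ∧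
      (ρ f).2.1 = CAct.recv (M.lab f) m (M.loc e))

/-- the run `ρ` is accepting -/
def IsAccepting (C : CFM P A) (M : MSC P A E)
    (ρ : E → C.S × CAct P A C.Msg × C.S) : Prop :=
  ∃ s : P → C.S, s ∈ C.Acc ∧ ∀ p,
    ((∃ e, M.loc e = p) → ∃ e, M.loc e = p ∧ (¬ ∃ f, M.next e f) ∧ s p = (ρ e).2.2) ∧
    ((¬ ∃ e, M.loc e = p) → s p = C.ι p)

/-- `M ∈ L(C)` -/
def Accepts (C : CFM P A) (M : MSC P A E) : Prop :=
  ∃ ρ, C.IsRun M ρ ∧ C.IsAccepting M ρ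

/-- deterministic CFMs -/
def Deterministic (C : CFM P A) : Prop :=
  ∀ p s γ₁ s₁ γ₂ s₂, (s, γ₁, s₁) ∈ C.Δ p → (s, γ₂, s₂) ∈ C.Δ p →
    CAct.labelOf γ₁ = CAct.labelOf γ₂ →
    ((∀ a₁ a₂, γ₁ = CAct.internal a₁ → γ₂ = CAct.internal a₂ → s₁ = s₂) ∧
     (∀ a₁ m₁ a₂ m₂ q, γ₁ = CAct.send a₁ m₁ q → γ₂ = CAct.send a₂ m₂ q →
        s₁ = s₂ ∧ m₁ = m₂) ∧
     (∀ a₁ a₂ m q, γ₁ = CAct.recv a₁ m q → γ₂ = CAct.recv a₂ m q → s₁ = s₂))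

end CFM

/-- acceptance of the extended MSC `(M, ξ)` by a CFM over a product alphabet -/
def AcceptsExt {P A E Ξ : Type} (C : CFM P (A × Ξ)) (M : MSC P A E) (ξ : E → Ξ) : Prop :=
  C.Accepts (M.relabel fun e => (M.lab e, ξ e))

/-- apply `μ` to an extended event, sending both `⊥` and `⊤` to `none` -/
def extToOptMap {E Θ : Type} (μ : E → Θ) : ExtEv E → Option Θ
  | .evt g => some (μ g)
  | _ => none

/-- apply `μ` to an extended event, preserving `⊥` and `⊤` -/
def extMap {E Θ : Type} (μ : E → Θ) : ExtEv E → ExtEv Θ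
  | .bot => ExtEv.bot
  | .evt g => ExtEv.evt (μ g)
  | .top => ExtEv.top

/-- formulas of the temporal logic TL -/
inductive TL (P A : Type) : Type where
  | lab (a : A) : TL P A
  | proc (p : P) : TL P A
  | disj (φ ψ : TL P A) : TL P A
  | neg (φ : TL P A) : TL P A
  | co (φ : TL P A) : TL P A
  | tuntil (φ ψ : TL P A) : TL P A
  | tsince (φ ψ : TL P A) : TL P A

/-- `M, e ⊨ φ` -/
def TLsat (M : MSC P A E) : TL P A → E → Prop
  | .lab a, e => M.lab e = a
  | .proc p, e => M.loc e = p
  | .disj φ ψ, e => TLsat M φ e ∨ TLsat M ψ e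
  | .neg φ, e => ¬ TLsat M φ e
  | .co φ, e => ∃ f, ¬ M.le e f ∧ ¬ M.le f e ∧ TLsat M φ f
  | .tuntil φ ψ, e => ∃ f, M.lt e f ∧ TLsat M ψ f ∧ ∀ g, M.lt e g → M.lt g f → TLsat M φ g
  | .tsince φ ψ, e => ∃ f, M.lt f e ∧ TLsat M ψ f ∧ ∀ g, M.lt f g → M.lt g e → TLsat M φ g

end Gossip

/-!
Every causal path from `e` to `f` is a chain of `→*`-segments joined by messages. If the chain
visits some process twice, the two visits are `≤`-comparable events of one process, hence
`→*`-related, so the loop between them can be cut. A chain visiting pairwise distinct processes is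
a gossip path, and a gossip path is strict because `≤` is antisymmetric while `→` and `◁` are
irreflexive.
-/

namespace Gossip.MSC

variable {P A E : Type} (M : MSC P A E)

/-- A path `e →* g₁ ◁ h₁ →* g₂ ◁ h₂ … ◁ hₙ →* f` whose messages arrive on the processes
`w = [loc h₁, …, loc hₙ]`. -/
def MsgChain (e : E) : List P → E → Prop
  | [], f => M.nextStar e f
  | q :: w, f => ∃ g h, M.nextStar e g ∧ M.msg g h ∧ M.loc h = q ∧ MsgChain h w f

variable {M}

theorem le_trans {e f g : E} (hef : M.le e f) (hfg : M.le f g) : M.le e g :=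
  Relation.ReflTransGen.trans hef hfg

theorem le_of_nextStar {e f : E} (h : M.nextStar e f) : M.le e f :=
  Relation.ReflTransGen.mono (fun _ _ => Or.inl) _ _ h

theorem le_of_msg {e f : E} (h : M.msg e f) : M.le e f :=
  Relation.ReflTransGen.single (Or.inr h)

theorem loc_eq_of_nextStar {e f : E} (h : M.nextStar e f) : M.loc e = M.loc f := by
  induction h with
  | refl => rfl
  | tail _ hstep ih => exact ih.trans (M.next_loc hstep)

theorem nextStar_of_le_of_loc_eq {e f : E} (h : M.le e f) (hloc : M.loc e = M.loc f) :
    M.nextStar e f := by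
  rcases M.next_total e f hloc with hef | hfe
  · exact hef
  · obtain rfl := M.causal_antisymm h (le_of_nextStar hfe)
    exact Relation.ReflTransGen.refl

theorem lt_of_le_of_step_of_le {e g h f : E} (heg : M.le e g)
    (hstep : M.next g h ∨ M.msg g h) (hhf : M.le h f) : M.lt e f := by
  have hgh : M.le g h := Relation.ReflTransGen.single hstep
  refine ⟨le_trans heg (le_trans hgh hhf), ?_⟩
  rintro rfl
  obtain rfl : g = h := M.causal_antisymm hgh (le_trans hhf heg)
  rcases hstep with hnext | hmsg
  · exact M.next_irrefl g hnext
  · exact M.msg_loc hmsg rfl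

namespace MsgChain

theorem le {e f : E} : ∀ {w : List P}, M.MsgChain e w f → M.le e f
  | [], h => le_of_nextStar h
  | _ :: _, ⟨_, _, heg, hgh, _, hhf⟩ =>
    le_trans (le_of_nextStar heg) (le_trans (le_of_msg hgh) hhf.le)

theorem nextStar_trans {e g f : E} {w : List P} (heg : M.nextStar e g) (hgf : M.MsgChain g w f) :
    M.MsgChain e w f := by
  cases w with
  | nil => exact Relation.ReflTransGen.trans heg hgf
  | cons q w =>
    obtain ⟨g', h, hgg', hg'h, hloc, hhf⟩ := hgf
    exact ⟨g', h, heg.trans hgg', hg'h, hloc, hhf⟩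

theorem append_iff {e f : E} {w₁ w₂ : List P} :
    M.MsgChain e (w₁ ++ w₂) f ↔ ∃ m, M.MsgChain e w₁ m ∧ M.MsgChain m w₂ f := by
  induction w₁ generalizing e with
  | nil =>
    exact ⟨fun h => ⟨e, Relation.ReflTransGen.refl, h⟩,
      fun ⟨_, hem, hmf⟩ => nextStar_trans hem hmf⟩
  | cons q w₁ ih =>
    constructor
    · rintro ⟨g, h, heg, hgh, hloc, hhf⟩
      obtain ⟨m, hhm, hmf⟩ := ih.1 hhf
      exact ⟨m, ⟨g, h, heg, hgh, hloc, hhm⟩, hmf⟩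
    · rintro ⟨m, ⟨g, h, heg, hgh, hloc, hhm⟩, hmf⟩
      exact ⟨g, h, heg, hgh, hloc, ih.2 ⟨m, hhm, hmf⟩⟩

theorem loc_eq_of_append_singleton {e f : E} {w : List P} {q : P}
    (h : M.MsgChain e (w ++ [q]) f) : M.loc f = q := by
  obtain ⟨_, -, _, _, -, -, rfl, hhf⟩ := append_iff.1 h
  exact (loc_eq_of_nextStar hhf).symm

-- The loop ends on the process of `e` and above `e`, so its endpoint is `→*`-reachable from `e`.
theorem skip_loop {e f : E} {u v : List P} (h : M.MsgChain e (u ++ M.loc e :: v) f) :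
    M.MsgChain e v f := by
  rw [← List.singleton_append, ← List.append_assoc] at h
  obtain ⟨m, hem, hmf⟩ := append_iff.1 h
  have hloc : M.loc e = M.loc m := (loc_eq_of_append_singleton hem).symm
  exact nextStar_trans (nextStar_of_le_of_loc_eq hem.le hloc) hmf

theorem exists_nodup {e f : E} {w : List P} (h : M.MsgChain e w f) :
    ∃ w', (M.loc e :: w').Nodup ∧ M.MsgChain e w' f := by
  induction w generalizing e with
  | nil => exact ⟨[], List.nodup_singleton _, h⟩
  | cons q w ih =>
    obtain ⟨g, h, heg, hgh, rfl, hhf⟩ := h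
    obtain ⟨w', hnodup, hw'⟩ := ih hhf
    have hchain : M.MsgChain e (M.loc h :: w') f := ⟨g, h, heg, hgh, rfl, hw'⟩
    by_cases hmem : M.loc e ∈ M.loc h :: w'
    · obtain ⟨u, v, huv⟩ := List.append_of_mem hmem
      rw [huv] at hnodup hchain
      exact ⟨v, hnodup.sublist (List.sublist_append_right _ _), skip_loop hchain⟩
    · exact ⟨_, List.nodup_cons.2 ⟨hmem, hnodup⟩, hchain⟩

end MsgChain

theorem exists_msgChain_of_le {e f : E} (h : M.le e f) : ∃ w, M.MsgChain e w f := by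
  induction h with
  | refl => exact ⟨[], Relation.ReflTransGen.refl⟩
  | @tail g f _ hstep ih =>
    obtain ⟨w, hw⟩ := ih
    rcases hstep with hnext | hmsg
    · exact ⟨w ++ [], MsgChain.append_iff.2 ⟨g, hw, Relation.ReflTransGen.single hnext⟩⟩
    · exact ⟨w ++ [M.loc f], MsgChain.append_iff.2
        ⟨g, hw, g, f, Relation.ReflTransGen.refl, hmsg, rfl, Relation.ReflTransGen.refl⟩⟩

theorem pathSem_nextStar_gossipSuffix_iff {e f : E} {w : List P} :
    pathSem M (.nextStar :: gossipSuffix (M.loc e) w) e f ↔ M.MsgChain e w f := by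
  induction w generalizing e with
  | nil => simp [pathSem, gossipSuffix, letterSem, MsgChain]
  | cons q w ih =>
    constructor
    · rintro ⟨g, heg, h, ⟨-, rfl, hgh⟩, hhf⟩
      exact ⟨g, h, heg, hgh, rfl, ih.1 hhf⟩
    · rintro ⟨g, h, heg, hgh, rfl, hhf⟩
      exact ⟨g, heg, h, ⟨(loc_eq_of_nextStar heg).symm, rfl, hgh⟩, ih.2 hhf⟩

end Gossip.MSC

open Gossip in
theorem stmt9_general {P A E : Type} (M : MSC P A E) (e f : E) :
    M.lt e f ↔ ∃ π : PathExpr P A, IsGossip π ∧ pathSem M π e f := by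
  constructor
  · rintro ⟨hle, hne⟩
    obtain ⟨w₀, hw₀⟩ := MSC.exists_msgChain_of_le hle
    obtain ⟨w, hnodup, hw⟩ := hw₀.exists_nodup
    cases w with
    | nil =>
      obtain ⟨g, heg, hgf⟩ := (Relation.ReflTransGen.cases_head hw).resolve_left hne
      exact ⟨gossipExpr (M.loc e) [], ⟨_, _, hnodup, rfl⟩, g, heg, f, hgf, rfl⟩
    | cons q w =>
      exact ⟨gossipExpr (M.loc e) (q :: w), ⟨_, _, hnodup, rfl⟩,
        MSC.pathSem_nextStar_gossipSuffix_iff.2 hw⟩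
  · rintro ⟨_, ⟨p, w, -, rfl⟩, hpath⟩
    cases w with
    | nil =>
      obtain ⟨g, heg, _, hgf, rfl⟩ := hpath
      exact MSC.lt_of_le_of_step_of_le .refl (.inl heg) (MSC.le_of_nextStar hgf)
    | cons q w =>
      obtain rfl : M.loc e = p := by
        obtain ⟨g, heg, _, ⟨hg, -⟩, -⟩ := hpath
        exact (MSC.loc_eq_of_nextStar heg).trans hg
      obtain ⟨g, h, heg, hgh, -, hhf⟩ := MSC.pathSem_nextStar_gossipSuffix_iff.1 hpath
      exact MSC.lt_of_le_of_step_of_le (MSC.le_of_nextStar heg) (.inr hgh) hhf.le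

open Gossip in
/-- `< = ⋃_{π ∈ Π^gossip} ⟦π⟧`. -/
theorem stmt9 {P A E : Type} [Fintype P] [Fintype A] (M : MSC P A E) (e f : E) :
    M.lt e f ↔ ∃ π : PathExpr P A, IsGossip π ∧ pathSem M π e f :=
  stmt9_general M e f
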